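/- arXiv:2410.16542 — 3 statements merged into one kernel-verified Lean document; each statement's English description precedes it below -/
import Mathlib

section
/- Let a < b, L > 0, and let f : ℝ → ℝ be an L-Lipschitz function that is constant on (−∞, a] and constant on [b, ∞). Then for every ε > 0 there exist an integer m ≤ ⌈L(b−a)/ε⌉ + 1 and real numbers c, a₁, …, a_m, t₁, …, t_m such that sup_{x ∈ ℝ} | f(x) − ( c + Σ_{i=1}^m a_i · max(0, x − t_i) ) | ≤ ε; that is, f is approximated to uniform error ε by a two-layer ReLU network with at most ⌈L(b−a)/ε⌉ + 1 hidden units. -/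
/-!
Interpolate `f` linearly at the equally spaced knots `tᵢ = a + i h`, `h = (b - a) / N`,
`N = ⌈L (b - a) / ε⌉`. Since `f` is constant outside `[a, b]`, the interpolant has slope `0` to
the left of `t₀` and to the right of `t_N`, so it is a ReLU network with one unit at each of the
`N + 1` knots, whose coefficient is the jump of the slope there. Writing
`f x - ca = ∑ᵢ (f (min x tᵢ₊₁) - f (min x tᵢ))`, the approximation error splits into segment
errors, of which only the one of the segment containing `x` is nonzero; that one is a convex
combination of increments of `f` over distances at most `h`, hence at most `L h ≤ ε`.
-/

open Finset NNReal

noncomputable def reluNet {m : ℕ} (c : ℝ) (A T : Fin m → ℝ) (x : ℝ) : ℝ :=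
  c + ∑ i, A i * max 0 (x - T i)

theorem sum_range_mul_sub_succ {R : Type*} [CommRing R] (s r : ℕ → R) (n : ℕ) :
    ∑ i ∈ range n, s i * (r i - r (i + 1)) =
      s 0 * r 0 + ∑ i ∈ range n, (s (i + 1) - s i) * r (i + 1) - s n * r n := by
  induction n with
  | zero => simp
  | succ n ih => rw [sum_range_succ, ih, sum_range_succ]; ring

theorem norm_sum_le_of_unique_ne_zero {ι E : Type*} [SeminormedAddCommGroup E]
    {s : Finset ι} {e : ι → E} {ε : ℝ} (hε : 0 ≤ ε) (he : ∀ i ∈ s, ‖e i‖ ≤ ε)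
    (huniq : ∀ i ∈ s, ∀ j ∈ s, e i ≠ 0 → e j ≠ 0 → i = j) : ‖∑ i ∈ s, e i‖ ≤ ε := by
  by_cases h : ∃ k ∈ s, e k ≠ 0
  · obtain ⟨k, hks, hk⟩ := h
    rw [sum_eq_single_of_mem k hks fun j hjs hjk =>
      by_contra fun hj => hjk (huniq j hjs k hks hj hk)]
    exact he k hks
  · push Not at h
    rwa [sum_eq_zero h, norm_zero]

/-- Unit coefficients of the ReLU network with knots `tᵢ` whose slope on `[tᵢ, tᵢ₊₁]` is `s i`. -/
def slopeJumps (s : ℕ → ℝ) (n : ℕ) : Fin (n + 1) → ℝ :=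
  Fin.cons (s 0) fun i : Fin n => s (i + 1) - s i

theorem reluNet_slopeJumps {s : ℕ → ℝ} {n : ℕ} (hs : s n = 0) (c : ℝ) (t : ℕ → ℝ) (x : ℝ) :
    reluNet c (slopeJumps s n) (fun i => t i) x =
      c + ∑ i ∈ range n, s i * (min x (t (i + 1)) - min x (t i)) := by
  have hrelu : ∀ y, max 0 (x - y) = x - min x y := fun y => by
    rw [← max_sub_sub_left, sub_self]
  set r : ℕ → ℝ := fun i => max 0 (x - t i)
  have hr : ∀ i, min x (t (i + 1)) - min x (t i) = r i - r (i + 1) := fun i => by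
    simp only [r, hrelu]
    ring
  simp only [reluNet, Fin.sum_univ_succ, slopeJumps, Fin.cons_zero, Fin.cons_succ, Fin.val_zero,
    Fin.val_succ, hr]
  change c + (s 0 * r 0 + ∑ i : Fin n, (s (i + 1) - s i) * r (i + 1)) = _
  rw [Fin.sum_univ_eq_sum_range (fun i => (s (i + 1) - s i) * r (i + 1)) n,
    sum_range_mul_sub_succ, hs]
  ring

section SegmentError

variable {f : ℝ → ℝ} {K : ℝ≥0} {p q x : ℝ}

noncomputable def segmentError (f : ℝ → ℝ) (p q x : ℝ) : ℝ :=
  f (min x q) - f (min x p) - slope f p q * (min x q - min x p)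

theorem segmentError_of_le_left (hpq : p ≤ q) (hx : x ≤ p) : segmentError f p q x = 0 := by
  simp [segmentError, min_eq_left hx, min_eq_left (hx.trans hpq)]

theorem segmentError_of_right_le (hpq : p < q) (hx : q ≤ x) : segmentError f p q x = 0 := by
  rw [segmentError, min_eq_right hx, min_eq_right (hpq.le.trans hx), slope_def_field,
    div_mul_cancel₀ _ (sub_ne_zero.2 hpq.ne'), sub_self]

theorem mem_Ioo_of_segmentError_ne_zero (hpq : p < q) (h : segmentError f p q x ≠ 0) :
    x ∈ Set.Ioo p q :=
  ⟨lt_of_not_ge fun hx => h (segmentError_of_le_left hpq.le hx),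
    lt_of_not_ge fun hx => h (segmentError_of_right_le hpq hx)⟩

theorem abs_sub_sub_slope_mul_le (hf : LipschitzWith K f) {u : ℝ} (hpq : p < q)
    (hpu : p ≤ u) (huq : u ≤ q) : |f u - f p - slope f p q * (u - p)| ≤ K * (q - p) := by
  have hlip : ∀ v ∈ Set.Icc p q, |f u - f v| ≤ K * (q - p) := fun v hv => by
    rw [← Real.dist_eq]
    refine (hf.dist_le_mul u v).trans (mul_le_mul_of_nonneg_left ?_ K.coe_nonneg)
    rw [Real.dist_eq, abs_le]
    constructor <;> linarith [hv.1, hv.2]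
  set w := (u - p) / (q - p)
  have hw0 : 0 ≤ w := div_nonneg (sub_nonneg.2 hpu) (sub_nonneg.2 hpq.le)
  have hw1 : w ≤ 1 := (div_le_one (sub_pos.2 hpq)).2 (by linarith)
  have hconvex : f u - f p - slope f p q * (u - p) = (1 - w) * (f u - f p) + w * (f u - f q) := by
    rw [slope_def_field]
    simp only [w]
    field_simp
    ring
  calc |f u - f p - slope f p q * (u - p)|
      ≤ |(1 - w) * (f u - f p)| + |w * (f u - f q)| := hconvex ▸ abs_add_le _ _
    _ = (1 - w) * |f u - f p| + w * |f u - f q| := by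
      rw [abs_mul, abs_mul, abs_of_nonneg (sub_nonneg.2 hw1), abs_of_nonneg hw0]
    _ ≤ (1 - w) * (K * (q - p)) + w * (K * (q - p)) := by
      gcongr
      exacts [hlip p ⟨le_rfl, hpq.le⟩, hlip q ⟨hpq.le, le_rfl⟩]
    _ = K * (q - p) := by ring

theorem abs_segmentError_le (hf : LipschitzWith K f) (hpq : p < q) :
    |segmentError f p q x| ≤ K * (q - p) := by
  by_cases hx : segmentError f p q x = 0
  · rw [hx, abs_zero]
    exact mul_nonneg K.coe_nonneg (sub_nonneg.2 hpq.le)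
  obtain ⟨hpx, hxq⟩ := mem_Ioo_of_segmentError_ne_zero hpq hx
  rw [segmentError, min_eq_left hxq.le, min_eq_right hpx.le]
  exact abs_sub_sub_slope_mul_le hf hpq hpx.le hxq.le

theorem abs_sum_segmentError_le (hf : LipschitzWith K f) {t : ℕ → ℝ} (ht : StrictMono t)
    {δ : ℝ} (hδ : ∀ i, t (i + 1) - t i ≤ δ) {n : ℕ} :
    |∑ i ∈ range n, segmentError f (t i) (t (i + 1)) x| ≤ K * δ := by
  have hseg : ∀ i, |segmentError f (t i) (t (i + 1)) x| ≤ K * δ := fun i =>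
    (abs_segmentError_le hf (ht (lt_add_one i))).trans
      (mul_le_mul_of_nonneg_left (hδ i) K.coe_nonneg)
  have hdisj : ∀ i j, segmentError f (t i) (t (i + 1)) x ≠ 0 →
      segmentError f (t j) (t (j + 1)) x ≠ 0 → ¬i < j := fun i j hi hj hij =>
    ((mem_Ioo_of_segmentError_ne_zero (ht (lt_add_one i)) hi).2.trans_le
      (ht.monotone hij)).not_gt (mem_Ioo_of_segmentError_ne_zero (ht (lt_add_one j)) hj).1
  simp only [← Real.norm_eq_abs] at hseg ⊢
  exact norm_sum_le_of_unique_ne_zero ((norm_nonneg _).trans (hseg 0)) (fun i _ => hseg i)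
    fun i _ j _ hi hj => le_antisymm (not_lt.1 (hdisj j i hj hi)) (not_lt.1 (hdisj i j hi hj))

end SegmentError

theorem exists_reluNet_sub_le {f : ℝ → ℝ} {K : ℝ≥0} (hf : LipschitzWith K f) {a b : ℝ}
    (hab : a < b) {ca cb : ℝ} (hca : ∀ x : ℝ, x ≤ a → f x = ca)
    (hcb : ∀ x : ℝ, b ≤ x → f x = cb) {N : ℕ} (hN : 0 < N) :
    ∃ A T : Fin (N + 1) → ℝ, ∀ x, |f x - reluNet ca A T x| ≤ K * ((b - a) / N) := by
  set h := (b - a) / N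
  have hh : 0 < h := div_pos (sub_pos.2 hab) (Nat.cast_pos.2 hN)
  set t : ℕ → ℝ := fun i => a + i * h
  have ht : StrictMono t := fun i j hij => by
    simp only [t]
    gcongr
  have hstep : ∀ i, t (i + 1) - t i = h := fun i => by simp only [t]; push_cast; ring
  have htN : t N = b := by simp only [t, h]; field_simp; ring
  set s : ℕ → ℝ := fun i => slope f (t i) (t (i + 1))
  have hsN : s N = 0 := by
    have hright : b ≤ t (N + 1) := htN ▸ (ht (lt_add_one N)).le
    simp only [s, slope_def_field, htN, hcb _ hright, hcb b le_rfl, sub_self, zero_div]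
  refine ⟨slopeJumps s N, fun i => t i, fun x => ?_⟩
  have hfx : f x = ca + ∑ i ∈ range N, (f (min x (t (i + 1))) - f (min x (t i))) := by
    have hleft : f (min x (t 0)) = ca := hca _ (min_le_of_right_le (by simp [t]))
    have hright : f (min x (t N)) = f x := by
      rcases le_total x b with hx | hx
      · rw [htN, min_eq_left hx]
      · rw [htN, min_eq_right hx, hcb b le_rfl, hcb x hx]
    rw [sum_range_sub (fun i => f (min x (t i))), hleft, hright]
    ring
  calc |f x - reluNet ca (slopeJumps s N) (fun i => t i) x|
      = |∑ i ∈ range N, segmentError f (t i) (t (i + 1)) x| := by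
        rw [reluNet_slopeJumps hsN, hfx]
        simp only [segmentError, sum_sub_distrib, s]
        ring_nf
    _ ≤ K * h := abs_sum_segmentError_le hf ht fun i => (hstep i).le

/-- Lipschitz function approximation: an `L`-Lipschitz function `f : ℝ → ℝ` that is
constant on `(−∞, a]` and on `[b, ∞)` can be uniformly approximated within `ε` by a
two-layer ReLU network `x ↦ c + Σ_{i=1}^m aᵢ · max(0, x − tᵢ)` with at most
`⌈L(b−a)/ε⌉ + 1` hidden units. -/
theorem lipschitz_relu_approx (a b L : ℝ) (hab : a < b) (hL : 0 < L)
    (f : ℝ → ℝ) (hf : ∀ x y : ℝ, |f x - f y| ≤ L * |x - y|)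
    (ca cb : ℝ) (hca : ∀ x : ℝ, x ≤ a → f x = ca) (hcb : ∀ x : ℝ, b ≤ x → f x = cb)
    (ε : ℝ) (hε : 0 < ε) :
    ∃ (m : ℕ) (c : ℝ) (A T : Fin m → ℝ),
      m ≤ ⌈L * (b - a) / ε⌉₊ + 1 ∧
      ∀ x : ℝ, |f x - (c + ∑ i, A i * max 0 (x - T i))| ≤ ε := by
  set N := ⌈L * (b - a) / ε⌉₊
  have hN : 0 < N := Nat.ceil_pos.2 (div_pos (mul_pos hL (sub_pos.2 hab)) hε)
  have hlip : LipschitzWith ⟨L, hL.le⟩ f :=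
    LipschitzWith.of_dist_le_mul fun x y => by
      rw [Real.dist_eq, Real.dist_eq]
      exact hf x y
  obtain ⟨A, T, happrox⟩ := exists_reluNet_sub_le hlip hab hca hcb hN
  refine ⟨N + 1, ca, A, T, le_rfl, fun x => (happrox x).trans ?_⟩
  have hceil : L * (b - a) ≤ N * ε := (div_le_iff₀ hε).1 (Nat.le_ceil _)
  change L * ((b - a) / N) ≤ ε
  rw [← mul_div_assoc, div_le_iff₀ (Nat.cast_pos.2 hN)]
  linarith
end

section
/- Let d ≥ 2 and 0 < r < R. Define l₁(t; γ) = min(t², γ²) for t ∈ ℝ, l₂(y; γ₁, γ₂) = min(max(√y, γ₁), γ₂) for y ≥ 0, and L : ℝ^d → ℝ by L(x) = l₁(x_d; r) + l₁( l₂( Σ_{i=1}^{d−1} l₁(x_i; R+r) ; R−r, R+r ) − R ; r ). Then {x ∈ ℝ^d : L(x) < r²} = {x ∈ ℝ^d : x_d² + (√(Σ_{i=1}^{d−1} x_i²) − R)² < r²}, i.e., the strict sublevel set of L at level r² is exactly the open solid torus. -/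
noncomputable section
def trSq (t γ : ℝ) : ℝ := min (t ^ 2) (γ ^ 2)
def clampSqrt (y γ₁ γ₂ : ℝ) : ℝ := min (max (Real.sqrt y) γ₁) γ₂

lemma trSq_nonneg (t γ : ℝ) : 0 ≤ trSq t γ := le_min (sq_nonneg _) (sq_nonneg _)

lemma trSq_eq_of_lt {t γ : ℝ} (h : t ^ 2 < γ ^ 2) : trSq t γ = t ^ 2 := min_eq_left h.le

lemma key (r R t S S' : ℝ) (hr : 0 < r) (hrR : r < R) (hS : 0 ≤ S) (hS' : 0 ≤ S')
    (h1 : S' < (R + r) ^ 2 → S' = S) (h2 : S < (R + r) ^ 2 → S' = S) :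
    trSq t r + trSq (clampSqrt S' (R - r) (R + r) - R) r < r ^ 2 ↔
      t ^ 2 + (Real.sqrt S - R) ^ 2 < r ^ 2 := by
  have hRr : 0 < R - r := by linarith
  constructor
  · intro h
    have hA : trSq t r < r ^ 2 := by have := trSq_nonneg (clampSqrt S' (R-r) (R+r) - R) r; linarith
    have hB : trSq (clampSqrt S' (R-r) (R+r) - R) r < r ^ 2 := by
      have := trSq_nonneg t r; linarith
    have ht2 : t ^ 2 < r ^ 2 := by
      rcases min_lt_iff.mp hA with h' | h' <;> [exact h'; exact absurd h' (lt_irrefl _)]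
    have hc2 : (clampSqrt S' (R-r) (R+r) - R) ^ 2 < r ^ 2 := by
      rcases min_lt_iff.mp hB with h' | h' <;> [exact h'; exact absurd h' (lt_irrefl _)]
    set c := clampSqrt S' (R-r) (R+r) with hc
    have habs : |c - R| < r := abs_lt_of_sq_lt_sq hc2 hr.le
    rw [abs_lt] at habs
    have hclt : c < R + r := by linarith [habs.2]
    have hcgt : R - r < c := by linarith [habs.1]
    have hmaxlt : max (Real.sqrt S') (R - r) < R + r := by
      rcases min_lt_iff.mp hclt with h' | h'
      · exact h'
      · exact absurd h' (lt_irrefl _)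
    have hslt : Real.sqrt S' < R + r := (max_lt_iff.mp hmaxlt).1
    have hsgt : R - r < Real.sqrt S' := by
      have : R - r < max (Real.sqrt S') (R - r) := lt_of_lt_of_le hcgt (min_le_left _ _)
      rcases lt_max_iff.mp this with h' | h'
      · exact h'
      · exact absurd h' (lt_irrefl _)
    have hceq : c = Real.sqrt S' := by
      rw [hc, clampSqrt, max_eq_left hsgt.le, min_eq_left hslt.le]
    have hS'lt : S' < (R + r) ^ 2 := by
      have := Real.sq_sqrt hS'
      nlinarith [Real.sqrt_nonneg S']
    have hSS : S' = S := h1 hS'lt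
    rw [hceq, hSS] at hB hc2 h
    rw [trSq_eq_of_lt ht2, trSq_eq_of_lt hc2] at h
    exact h
  · intro h
    have ht2 : t ^ 2 < r ^ 2 := by nlinarith [sq_nonneg (Real.sqrt S - R)]
    have hs2 : (Real.sqrt S - R) ^ 2 < r ^ 2 := by nlinarith [sq_nonneg t]
    have habs : |Real.sqrt S - R| < r := abs_lt_of_sq_lt_sq hs2 hr.le
    rw [abs_lt] at habs
    have hslt : Real.sqrt S < R + r := by linarith [habs.2]
    have hsgt : R - r < Real.sqrt S := by linarith [habs.1]
    have hSlt : S < (R + r) ^ 2 := by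
      have := Real.sq_sqrt hS
      nlinarith [Real.sqrt_nonneg S]
    have hSS : S' = S := h2 hSlt
    have hceq : clampSqrt S' (R-r) (R+r) = Real.sqrt S := by
      rw [clampSqrt, hSS, max_eq_left hsgt.le, min_eq_left hslt.le]
    rw [hceq, trSq_eq_of_lt ht2, trSq_eq_of_lt hs2]
    exact h

/-- The strict sublevel set at level `r²` of the truncated/clamped function
`L(x) = l₁(x_d; r) + l₁(l₂(Σ_{i<d−1} l₁(xᵢ; R+r); R−r, R+r) − R; r)`
is exactly the open solid torus
`{x : x_d² + (√(Σ_{i<d−1} xᵢ²) − R)² < r²}`. -/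
theorem truncated_torus_sublevel (d : ℕ) (hd : 2 ≤ d) (r R : ℝ) (hr : 0 < r) (hrR : r < R) :
    {x : Fin d → ℝ |
        trSq (x ⟨d - 1, by omega⟩) r +
          trSq (clampSqrt (∑ i : Fin (d - 1), trSq (x (Fin.castLE (by omega) i)) (R + r))
            (R - r) (R + r) - R) r < r ^ 2} =
      {x : Fin d → ℝ |
        (x ⟨d - 1, by omega⟩) ^ 2 +
          (Real.sqrt (∑ i : Fin (d - 1), x (Fin.castLE (by omega) i) ^ 2) - R) ^ 2
            < r ^ 2} := by
  ext x
  simp only [Set.mem_setOf_eq]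
  refine key r R _ _ _ hr hrR (Finset.sum_nonneg fun i _ => sq_nonneg _)
    (Finset.sum_nonneg fun i _ => trSq_nonneg _ _) ?_ ?_
  · intro h
    refine Finset.sum_congr rfl fun i _ => ?_
    have hle : trSq (x (Fin.castLE (by omega) i)) (R + r) ≤
        ∑ j : Fin (d - 1), trSq (x (Fin.castLE (by omega) j)) (R + r) :=
      Finset.single_le_sum (f := fun j : Fin (d-1) => trSq (x (Fin.castLE (by omega) j)) (R + r)) (fun j _ => trSq_nonneg _ _) (Finset.mem_univ i)
    have hlt : trSq (x (Fin.castLE (by omega) i)) (R + r) < (R + r) ^ 2 := lt_of_le_of_lt hle h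
    have : (x (Fin.castLE (by omega) i)) ^ 2 < (R + r) ^ 2 := by
      rcases min_lt_iff.mp hlt with h' | h'
      · exact h'
      · exact absurd h' (lt_irrefl _)
    exact min_eq_left this.le
  · intro h
    refine Finset.sum_congr rfl fun i _ => ?_
    have hle : (x (Fin.castLE (by omega) i)) ^ 2 ≤
        ∑ j : Fin (d - 1), (x (Fin.castLE (by omega) j)) ^ 2 :=
      Finset.single_le_sum (f := fun j : Fin (d-1) => (x (Fin.castLE (by omega) j)) ^ 2) (fun j _ => sq_nonneg _) (Finset.mem_univ i)
    exact min_eq_left (lt_of_le_of_lt hle h).le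
end
end

section
/- Let d ≥ 1, r > 0, 0 < δ < r², and let μ be a finite measure on ℝ^d. Define L(x) = Σ_{i=1}^d min(x_i², r²), the piecewise linear threshold f : ℝ → ℝ by f(t) = 1 for t < r² − δ, f(t) = (r² − t)/δ for r² − δ ≤ t ≤ r², and f(t) = 0 for t > r², and let B = {x ∈ ℝ^d : ‖x‖₂ ≤ r} and S_δ = {x ∈ ℝ^d : r² − δ ≤ ‖x‖₂² ≤ r²}. Then ∫_{ℝ^d} ( f(L(x)) − 1_B(x) )² dμ(x) ≤ μ(S_δ). -/
/-!
Write `L(x) = ∑ᵢ min(xᵢ², r²)`. Since `t ↦ min(t, r²)` is subadditive on `[0, ∞)`,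
`min(‖x‖², r²) ≤ L(x) ≤ ‖x‖²`. Hence below the shell `L(x) = ‖x‖² < r² − δ`, so `f(L(x)) = 1 = 1_B(x)`,
and above it `L(x) ≥ r²`, so `f(L(x)) = 0 = 1_B(x)`. The integrand vanishes off the shell and is at
most `1` on it, because both `f` and `1_B` take values in `[0, 1]`.
-/

open MeasureTheory

noncomputable section

/-- The piecewise linear threshold: `f(t) = 1` for `t < r² − δ`, linear ramp down on
`[r² − δ, r²]`, and `f(t) = 0` for `t > r²`. -/
def rampThreshold (r δ t : ℝ) : ℝ :=
  if t < r ^ 2 - δ then 1 else if t ≤ r ^ 2 then (r ^ 2 - t) / δ else 0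

lemma min_add_le_min_add_min {a b c : ℝ} (ha : 0 ≤ a) (hb : 0 ≤ b) (hc : 0 ≤ c) :
    min (a + b) c ≤ min a c + min b c := by
  simp only [min_def]
  split_ifs <;> linarith

lemma Finset.min_sum_le_sum_min {ι : Type*} (s : Finset ι) {a : ι → ℝ}
    (ha : ∀ i ∈ s, 0 ≤ a i) {c : ℝ} (hc : 0 ≤ c) :
    min (∑ i ∈ s, a i) c ≤ ∑ i ∈ s, min (a i) c :=
  Finset.le_sum_of_subadditive_on_pred (fun t ↦ min t c) (0 ≤ ·) (min_le_left 0 c)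
    (fun _ _ hx hy ↦ min_add_le_min_add_min hx hy hc) (fun _ _ ↦ add_nonneg) a ha

section RampThreshold

variable {r δ t : ℝ}

lemma rampThreshold_mem_Icc (hδ : 0 < δ) : rampThreshold r δ t ∈ Set.Icc 0 1 := by
  unfold rampThreshold
  split_ifs with hlow hhigh
  · simp
  · have hlow := not_lt.1 hlow
    exact ⟨div_nonneg (by linarith) hδ.le, (div_le_one hδ).2 (by linarith)⟩
  · simp

lemma rampThreshold_of_lt (ht : t < r ^ 2 - δ) : rampThreshold r δ t = 1 :=
  if_pos ht

lemma rampThreshold_of_le (hδ : 0 ≤ δ) (ht : r ^ 2 ≤ t) : rampThreshold r δ t = 0 := by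
  unfold rampThreshold
  split_ifs with hlow hhigh
  · linarith
  · simp [le_antisymm hhigh ht]
  · rfl

end RampThreshold

section ThresholdError

variable {ι : Type*} [Fintype ι] {r δ : ℝ}

lemma sum_min_sq_eq_of_sum_sq_le {x : ι → ℝ} (hx : ∑ i, x i ^ 2 ≤ r ^ 2) :
    ∑ i, min (x i ^ 2) (r ^ 2) = ∑ i, x i ^ 2 :=
  le_antisymm (Finset.sum_le_sum fun _ _ ↦ min_le_left _ _) <| by
    simpa [min_eq_left hx] using
      Finset.univ.min_sum_le_sum_min (fun i _ ↦ sq_nonneg (x i)) (sq_nonneg r)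

lemma le_sum_min_sq_of_le_sum_sq {x : ι → ℝ} (hx : r ^ 2 ≤ ∑ i, x i ^ 2) :
    r ^ 2 ≤ ∑ i, min (x i ^ 2) (r ^ 2) := by
  simpa [min_eq_right hx] using
    Finset.univ.min_sum_le_sum_min (fun i _ ↦ sq_nonneg (x i)) (sq_nonneg r)

lemma threshold_error_le_one (hδ : 0 < δ) (x : ι → ℝ) :
    (rampThreshold r δ (∑ i, min (x i ^ 2) (r ^ 2)) -
      Set.indicator {y : ι → ℝ | √(∑ i, y i ^ 2) ≤ r} 1 x) ^ 2 ≤ 1 := by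
  obtain ⟨hf₀, hf₁⟩ := rampThreshold_mem_Icc (r := r) (t := ∑ i, min (x i ^ 2) (r ^ 2)) hδ
  have hB₀ : (0 : ℝ) ≤ Set.indicator {y : ι → ℝ | √(∑ i, y i ^ 2) ≤ r} 1 x :=
    Set.indicator_nonneg (fun _ _ ↦ zero_le_one) x
  have hB₁ : Set.indicator {y : ι → ℝ | √(∑ i, y i ^ 2) ≤ r} (1 : (ι → ℝ) → ℝ) x ≤ 1 :=
    Set.indicator_le_self' (fun _ _ ↦ zero_le_one) x
  nlinarith

lemma threshold_error_eq_zero_of_notMem_shell (hr : 0 < r) (hδ : 0 < δ) {x : ι → ℝ}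
    (hx : x ∉ {x : ι → ℝ | r ^ 2 - δ ≤ ∑ i, x i ^ 2 ∧ ∑ i, x i ^ 2 ≤ r ^ 2}) :
    (rampThreshold r δ (∑ i, min (x i ^ 2) (r ^ 2)) -
      Set.indicator {y : ι → ℝ | √(∑ i, y i ^ 2) ≤ r} 1 x) ^ 2 = 0 := by
  have hball : x ∈ {y : ι → ℝ | √(∑ i, y i ^ 2) ≤ r} ↔ ∑ i, x i ^ 2 ≤ r ^ 2 :=
    Real.sqrt_le_left hr.le
  simp only [Set.mem_ofPred_eq, not_and_or, not_le] at hx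
  rcases hx with hinside | houtside
  · have hle : ∑ i, x i ^ 2 ≤ r ^ 2 := by linarith
    rw [sum_min_sq_eq_of_sum_sq_le hle, rampThreshold_of_lt hinside,
      Set.indicator_of_mem (hball.2 hle)]
    simp
  · rw [rampThreshold_of_le hδ.le (le_sum_min_sq_of_le_sum_sq houtside.le),
      Set.indicator_of_notMem (mt hball.1 houtside.not_ge)]
    simp

end ThresholdError

theorem threshold_error_le_shell_general (d : ℕ) (r δ : ℝ) (hr : 0 < r)
    (hδ0 : 0 < δ) (μ : Measure (Fin d → ℝ)) [IsFiniteMeasure μ] :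
    ∫ x, (rampThreshold r δ (∑ i, min (x i ^ 2) (r ^ 2)) -
        Set.indicator {y : Fin d → ℝ | Real.sqrt (∑ i, y i ^ 2) ≤ r} 1 x) ^ 2 ∂μ ≤
      (μ {x : Fin d → ℝ | r ^ 2 - δ ≤ ∑ i, x i ^ 2 ∧ ∑ i, x i ^ 2 ≤ r ^ 2}).toReal :=
  (ENNReal.ofReal_le_iff_le_toReal (measure_ne_top μ _)).1 <|
    integral_le_measure (fun x _ ↦ threshold_error_le_one hδ0 x)
      (fun _ hx ↦ (threshold_error_eq_zero_of_notMem_shell hr hδ0 hx).le)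

/-- The squared error between the thresholded truncated square sum
`f(L(x))`, with `L(x) = Σᵢ min(xᵢ², r²)`, and the indicator of the closed ball `B_r^d`
integrates to at most the measure of the transition shell
`S_δ = {x : r² − δ ≤ ‖x‖² ≤ r²}`. -/
theorem threshold_error_le_shell (d : ℕ) (hd : 1 ≤ d) (r δ : ℝ) (hr : 0 < r)
    (hδ0 : 0 < δ) (hδ : δ < r ^ 2) (μ : Measure (Fin d → ℝ)) [IsFiniteMeasure μ] :
    ∫ x, (rampThreshold r δ (∑ i, min (x i ^ 2) (r ^ 2)) -
        Set.indicator {y : Fin d → ℝ | Real.sqrt (∑ i, y i ^ 2) ≤ r} 1 x) ^ 2 ∂μ ≤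
      (μ {x : Fin d → ℝ | r ^ 2 - δ ≤ ∑ i, x i ^ 2 ∧ ∑ i, x i ^ 2 ≤ r ^ 2}).toReal :=
  threshold_error_le_shell_general d r δ hr hδ0 μ
end
end
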